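/- If an element x of the ZFA cumulative hierarchy (or of a set with a permutation action) has some finite supporting set A, then x has a unique least finite supporting set supp(x); that is, the intersection of all finite supporting sets of x is itself a supporting set. -/

import Mathlib

/-!
Finite supports of `x` are closed under intersection. A finitely supported permutation fixing
`A ∩ B` pointwise is a product of transpositions of atoms outside `A ∩ B`, and such a
transposition `(a b)` fixes `x`: either it fixes `A` or `B` pointwise, or `a ∉ A`, `b ∉ B` and
it is the conjugate `(a c)(c b)(a c)` by a fresh atom `c`, whose factors fix `A`, `B`, `A`
pointwise. A finite support of least cardinality is therefore contained in every finite support,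
so it is their intersection.
-/

/-- Atoms: a countably infinite set. -/
abbrev Atom := ℕ

/-- The set of atoms moved by a permutation. -/
def Nontriv (π : Equiv.Perm Atom) : Set Atom := {a | π a ≠ a}

/-- `A` supports `x`: every (finite) permutation fixing every atom of `A` fixes `x`. -/
def Supports {X : Type*} [MulAction (Equiv.Perm Atom) X] (A : Set Atom) (x : X) : Prop :=
  ∀ π : Equiv.Perm Atom, (Nontriv π).Finite → (∀ a ∈ A, π a = a) → π • x = x

theorem Set.sInter_mem_of_inter_mem {α : Type*} {S : Set (Set α)} (hne : S.Nonempty)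
    (hfin : ∀ A ∈ S, A.Finite) (hinter : ∀ A ∈ S, ∀ B ∈ S, A ∩ B ∈ S) : ⋂₀ S ∈ S := by
  obtain ⟨M, hM, hmin⟩ := exists_minimalFor_of_wellFoundedLT (· ∈ S) Set.ncard hne
  suffices hle : M ⊆ ⋂₀ S by rwa [(Set.sInter_subset_of_mem hM).antisymm hle]
  refine Set.subset_sInter fun A hA => Set.inter_eq_left.mp ?_
  exact Set.eq_of_subset_of_ncard_le Set.inter_subset_left
    (hmin (hinter M hM A hA) (Set.ncard_inter_le_ncard_left M A (hfin M hM))) (hfin M hM)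

open Equiv

section Supports

variable {X : Type*} [MulAction (Perm Atom) X] {x : X} {A B C : Set Atom}

theorem Supports.swap_smul_eq (hA : Supports A x) {a b : Atom} (ha : a ∉ A) (hb : b ∉ A) :
    swap a b • x = x :=
  hA _ finite_compl_fixedBy_swap fun _ hc =>
    swap_apply_of_ne_of_ne (ne_of_mem_of_not_mem hc ha) (ne_of_mem_of_not_mem hc hb)

theorem Supports.swap_smul_eq_of_notMem_of_notMem (hA : Supports A x) (hB : Supports B x)
    (hAf : A.Finite) (hBf : B.Finite) {a b : Atom} (ha : a ∉ A) (hb : b ∉ B) :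
    swap a b • x = x := by
  obtain rfl | hab := eq_or_ne a b
  · rw [swap_self, ← Perm.one_def, one_smul]
  obtain ⟨c, hc⟩ := ((hAf.union hBf).union (Set.finite_singleton b)).infinite_compl.nonempty
  simp only [Set.mem_compl_iff, Set.mem_union, Set.mem_singleton_iff, not_or] at hc
  obtain ⟨⟨hcA, hcB⟩, hcb⟩ := hc
  have hconj : swap a b = swap a c * swap c b * (swap a c)⁻¹ := by
    rw [← swap_apply_apply, swap_apply_right, swap_apply_of_ne_of_ne hab.symm (Ne.symm hcb)]
  rw [hconj, swap_inv, mul_smul, mul_smul, hA.swap_smul_eq ha hcA, hB.swap_smul_eq hcB hb,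
    hA.swap_smul_eq ha hcA]

theorem supports_of_swap_smul_eq (h : ∀ a ∉ C, ∀ b ∉ C, swap a b • x = x) : Supports C x := by
  intro π hπ hfix
  let S : Set (Perm Atom) := {σ | ∃ a b, a ≠ b ∧ a ∉ C ∧ b ∉ C ∧ σ = swap a b}
  have hS : ∀ σ ∈ S, σ.IsSwap := fun _ ⟨a, b, hab, _, _, hσ⟩ => ⟨a, b, hab, hσ⟩
  have hle : Subgroup.closure S ≤ MulAction.stabilizer (Perm Atom) x :=
    (Subgroup.closure_le _).2 fun _ ⟨a, b, _, ha, hb, hσ⟩ => hσ ▸ h a ha b hb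
  refine hle ((mem_closure_isSwap hS).2 ⟨hπ, fun a => ?_⟩)
  rw [← swap_mem_closure_isSwap hS]
  by_cases ha : π a = a
  · rw [ha, swap_self, ← Perm.one_def]
    exact one_mem _
  · exact Subgroup.subset_closure
      ⟨π a, a, ha, fun h => ha (π.injective (hfix _ h)), fun h => ha (hfix a h), rfl⟩

theorem Supports.inter (hA : Supports A x) (hB : Supports B x) (hAf : A.Finite)
    (hBf : B.Finite) : Supports (A ∩ B) x := by
  refine supports_of_swap_smul_eq fun a ha b hb => ?_
  rw [Set.mem_inter_iff, not_and_or] at ha hb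
  rcases ha with ha | ha <;> rcases hb with hb | hb
  · exact hA.swap_smul_eq ha hb
  · exact hA.swap_smul_eq_of_notMem_of_notMem hB hAf hBf ha hb
  · exact hB.swap_smul_eq_of_notMem_of_notMem hA hBf hAf ha hb
  · exact hB.swap_smul_eq ha hb

end Supports

/-- If `x` has some finite supporting set, then the intersection of all finite supporting
sets of `x` is itself a (finite) supporting set, hence `x` has a unique least finite
supporting set `supp x`. -/
theorem least_finite_support_exists {X : Type*} [MulAction (Equiv.Perm Atom) X] (x : X)
    (h : ∃ A : Set Atom, A.Finite ∧ Supports A x) :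
    (⋂₀ {A : Set Atom | A.Finite ∧ Supports A x}).Finite ∧
      Supports (⋂₀ {A : Set Atom | A.Finite ∧ Supports A x}) x :=
  Set.sInter_mem_of_inter_mem h (fun _ hA => hA.1) fun _ hA _ hB =>
    ⟨hA.1.inter_of_left _, hA.2.inter hB.2 hA.1 hB.1⟩
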